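/- Let V1 = (1,b1,c1,d1) and V2 = (0,b2,c2,1) in se(2) × R with b2² + c2² ≠ 0 (a T1-system). Then the forward-kinematics map FK^(2,1,2,1): R⁴ → SE(2) × R, (t1,t2,t3,t4) ↦ exp(t1V2)exp(t2V1)exp(t3V2)exp(t4V1), is not injective (hence not invertible) on any neighborhood of the origin: in particular the planar map f(t2,t3) = ((cos t2 − 1)·t3, sin t2 · t3) has no local inverse, as points (0,β) with β ≠ 0 are not attained near the origin while f(t2,0) = 0 for all t2. -/

import Mathlib

open Matrix Real

def eθ : Matrix (Fin 3) (Fin 3) ℝ := !![0,-1,0;1,0,0;0,0,0]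
def ex : Matrix (Fin 3) (Fin 3) ℝ := !![0,0,1;0,0,0;0,0,0]
def ey : Matrix (Fin 3) (Fin 3) ℝ := !![0,0,0;0,0,1;0,0,0]

def se2 (a b c : ℝ) : Matrix (Fin 3) (Fin 3) ℝ := a • eθ + b • ex + c • ey

/-- FK^(2,1,2,1) for a T1-system V1 = (1,b1,c1,d1), V2 = (0,b2,c2,1) on SE(2) × ℝ:
the SE(2) part is the product of exponentials and the ℝ part is additive. -/
noncomputable def FK2121 (b1 c1 d1 b2 c2 : ℝ) (t : Fin 4 → ℝ) :
    Matrix (Fin 3) (Fin 3) ℝ × ℝ :=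
  (NormedSpace.exp (t 0 • se2 0 b2 c2) * NormedSpace.exp (t 1 • se2 1 b1 c1) *
      NormedSpace.exp (t 2 • se2 0 b2 c2) * NormedSpace.exp (t 3 • se2 1 b1 c1),
    t 0 * 1 + t 1 * d1 + t 2 * 1 + t 3 * d1)

/-- The planar map to which the (x,y)-equation of FK^(2,1,2,1) reduces at θ = z = 0. -/
noncomputable def fT1 (p : ℝ × ℝ) : ℝ × ℝ := ((cos p.1 - 1) * p.2, sin p.1 * p.2)

lemma exp_mul_exp_neg (A : Matrix (Fin 3) (Fin 3) ℝ) :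
    NormedSpace.exp A * NormedSpace.exp (-A) = 1 := by
  have h := Matrix.exp_add_of_commute A (-A) (Commute.neg_right (Commute.refl A))
  rw [add_neg_cancel, NormedSpace.exp_zero] at h
  exact h.symm

lemma FK_loop (b1 c1 d1 b2 c2 s : ℝ) :
    FK2121 b1 c1 d1 b2 c2 ![s, 0, -s, 0] = (1, 0) := by
  unfold FK2121
  have h0 : ∀ b c : ℝ, NormedSpace.exp ((0:ℝ) • se2 1 b c) = 1 := by
    intro b c; rw [zero_smul, NormedSpace.exp_zero]
  simp only [Matrix.cons_val_zero, Matrix.cons_val_one, Matrix.head_cons,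
    Matrix.cons_val_two, Matrix.tail_cons, Matrix.cons_val_three, h0, mul_one, neg_smul]
  rw [exp_mul_exp_neg]
  norm_num

lemma small_ne_zero {U : Set ℝ} (hU : U ∈ nhds (0 : ℝ)) : ∃ s : ℝ, s ≠ 0 ∧ s ∈ U := by
  obtain ⟨ε, hε, hball⟩ := Metric.mem_nhds_iff.mp hU
  refine ⟨ε / 2, by positivity, hball ?_⟩
  simp only [Metric.mem_ball, Real.dist_eq, sub_zero]
  rw [abs_of_pos (by positivity : (0:ℝ) < ε / 2)]
  linarith

/-- Lack of switch-optimal inversion for T1-systems on SE(2) × ℝ: FK^(2,1,2,1) is not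
injective on any neighborhood of the origin; the reduced planar map f has no local
inverse: it is non-injective near the origin and misses all points (0,β), β ≠ 0. -/
theorem no_switch_optimal_T1 (b1 c1 d1 b2 c2 : ℝ) (h : b2 ^ 2 + c2 ^ 2 ≠ 0) :
    (∀ U ∈ nhds (0 : Fin 4 → ℝ), ¬ Set.InjOn (FK2121 b1 c1 d1 b2 c2) U) ∧
    (∀ U ∈ nhds ((0, 0) : ℝ × ℝ), ¬ Set.InjOn fT1 U) ∧
    (∀ β : ℝ, β ≠ 0 → ((0 : ℝ), β) ∉ Set.range fT1) := by
  refine ⟨?_, ?_, ?_⟩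
  · intro U hU hInj
    have hg : Continuous fun s : ℝ => (![s, 0, -s, 0] : Fin 4 → ℝ) := by
      apply continuous_pi
      intro i
      fin_cases i <;> simp <;> continuity
    have hg0 : (![(0:ℝ), 0, -0, 0] : Fin 4 → ℝ) = 0 := by
      funext i; fin_cases i <;> simp
    have hmem : (fun s : ℝ => (![s, 0, -s, 0] : Fin 4 → ℝ)) ⁻¹' U ∈ nhds (0 : ℝ) := by
      apply hg.continuousAt.preimage_mem_nhds
      rwa [hg0]
    obtain ⟨s, hs, hsU⟩ := small_ne_zero hmem
    have h0U : (0 : Fin 4 → ℝ) ∈ U := mem_of_mem_nhds hU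
    have heq : FK2121 b1 c1 d1 b2 c2 ![s, 0, -s, 0] = FK2121 b1 c1 d1 b2 c2 0 := by
      rw [FK_loop]
      have : (0 : Fin 4 → ℝ) = ![(0:ℝ), 0, -0, 0] := hg0.symm
      rw [this, FK_loop]
    have := hInj hsU h0U heq
    have := congrFun this 0
    simp at this
    exact hs this
  · intro U hU hInj
    have hg : Continuous fun s : ℝ => ((s, 0) : ℝ × ℝ) := by continuity
    have hmem : (fun s : ℝ => ((s, 0) : ℝ × ℝ)) ⁻¹' U ∈ nhds (0 : ℝ) :=
      hg.continuousAt.preimage_mem_nhds hU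
    obtain ⟨s, hs, hsU⟩ := small_ne_zero hmem
    have h0U : ((0, 0) : ℝ × ℝ) ∈ U := mem_of_mem_nhds hU
    have heq : fT1 (s, 0) = fT1 (0, 0) := by simp [fT1]
    have := hInj hsU h0U heq
    exact hs (congrArg Prod.fst this)
  · intro β hβ ⟨⟨a, t⟩, hat⟩
    simp only [fT1, Prod.mk.injEq] at hat
    obtain ⟨h1, h2⟩ := hat
    have ht : t ≠ 0 := by
      rintro rfl; simp at h2; exact hβ h2.symm
    have hcos : cos a = 1 := by
      have := mul_eq_zero.mp h1
      rcases this with h | h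
      · linarith [h]
      · exact absurd h ht
    have hsin : sin a = 0 := by
      have := sin_sq_add_cos_sq a
      nlinarith [sin_sq_add_cos_sq a]
    rw [hsin, zero_mul] at h2
    exact hβ h2.symm
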